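/- Let n and k be integers with 2 ≤ k < n, and let w : (0,∞) → ℝ be measurable with I₀ := ∫₀^∞ s^{n−k−1} |w(s)| ds < ∞. Define ψ(r) = c_{k,n} r^{2−n} ∫₀^r s^{n−k−1} w(s) (r² − s²)^{k/2 − 1} ds for r > 0. Then for every ε > 0 and every x ∈ ℝⁿ with x ≠ 0, one has ∫_ε^∞ |ψ(|x|/t)| t^{−(n+1)} dt ≤ (c_{k,n} I₀ / k) · ε^{−k} |x|^{k−n}. -/
import Mathlib


open MeasureTheory

/-- `sphereVol m` is the surface area `σ_{m-1} = 2 π^{m/2} / Γ(m/2)` of the unit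
sphere in `ℝ^m`. -/
noncomputable def sphereVol (m : ℕ) : ℝ := 2 * Real.pi ^ ((m : ℝ) / 2) / Real.Gamma ((m : ℝ) / 2)

/-- The constant `c_{k,n} = σ_{k-1} σ_{n-k-1} / σ_{n-1}`. -/
noncomputable def radonConst (k n : ℕ) : ℝ := sphereVol k * sphereVol (n - k) / sphereVol n

/-- Lemma `lem:260119-81`(2) for `k ≥ 2`:
`∫_ε^∞ |ψ(|x|/t)| t^{-(n+1)} dt ≤ (c_{k,n} I₀ / k) ε^{-k} |x|^{k-n}`. -/
lemma sphereVol_nonneg (m : ℕ) : 0 ≤ sphereVol m := by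
  rcases Nat.eq_zero_or_pos m with h | h
  · simp [sphereVol, h, Real.Gamma_zero]
  · have : 0 < Real.Gamma ((m : ℝ) / 2) :=
      Real.Gamma_pos_of_pos (by positivity)
    unfold sphereVol
    positivity

lemma radonConst_nonneg (k n : ℕ) : 0 ≤ radonConst k n :=
  div_nonneg (mul_nonneg (sphereVol_nonneg _) (sphereVol_nonneg _)) (sphereVol_nonneg _)

theorem stmt_6 (n k : ℕ) (hk : 2 ≤ k) (hkn : k < n) (w : ℝ → ℝ) (hw : Measurable w)
    (hI : IntegrableOn (fun s => s ^ ((n : ℝ) - k - 1) * |w s|) (Set.Ioi 0))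
    (ψ : ℝ → ℝ)
    (hψ : ∀ r : ℝ, 0 < r → ψ r = radonConst k n * r ^ ((2 : ℝ) - n) *
      ∫ s in Set.Ioo 0 r, s ^ ((n : ℝ) - k - 1) * w s * (r ^ 2 - s ^ 2) ^ ((k : ℝ) / 2 - 1))
    (ε : ℝ) (hε : 0 < ε) (x : EuclideanSpace ℝ (Fin n)) (hx : x ≠ 0) :
    (∫⁻ t in Set.Ioi ε, ENNReal.ofReal (|ψ (‖x‖ / t)| * t ^ (-(n : ℝ) - 1)))
      ≤ ENNReal.ofReal
          (radonConst k n * (∫ s in Set.Ioi 0, s ^ ((n : ℝ) - k - 1) * |w s|) / k *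
            ε ^ (-(k : ℝ)) * ‖x‖ ^ ((k : ℝ) - n)) := by
  set c := radonConst k n with hc_def
  set I₀ := ∫ s in Set.Ioi 0, s ^ ((n : ℝ) - k - 1) * |w s| with hI0_def
  have hc : 0 ≤ c := radonConst_nonneg k n
  have hI0 : 0 ≤ I₀ := setIntegral_nonneg measurableSet_Ioi (fun s hs =>
    mul_nonneg (Real.rpow_nonneg (le_of_lt hs) _) (abs_nonneg _))
  have hxn : 0 < ‖x‖ := norm_pos_iff.mpr hx
  -- pointwise bound on ψ
  have hψb : ∀ r : ℝ, 0 < r → |ψ r| ≤ c * I₀ * r ^ ((k : ℝ) - n) := by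
    intro r hr
    have hIoo : Set.Ioo (0:ℝ) r ⊆ Set.Ioi 0 := Set.Ioo_subset_Ioi_self
    -- dominating function
    have hg : IntegrableOn (fun s => s ^ ((n : ℝ) - k - 1) * |w s| * r ^ ((k : ℝ) - 2))
        (Set.Ioo 0 r) := (hI.mono_set hIoo).mul_const _
    have hmeas : AEStronglyMeasurable
        (fun s => s ^ ((n : ℝ) - k - 1) * w s * (r ^ 2 - s ^ 2) ^ ((k : ℝ) / 2 - 1))
        (volume.restrict (Set.Ioo 0 r)) := by
      apply Measurable.aestronglyMeasurable
      fun_prop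
    have hbound : ∀ᵐ s ∂(volume.restrict (Set.Ioo 0 r)),
        ‖s ^ ((n : ℝ) - k - 1) * w s * (r ^ 2 - s ^ 2) ^ ((k : ℝ) / 2 - 1)‖ ≤
          s ^ ((n : ℝ) - k - 1) * |w s| * r ^ ((k : ℝ) - 2) := by
      rw [ae_restrict_iff' measurableSet_Ioo]
      filter_upwards with s hs
      obtain ⟨hs0, hsr⟩ := hs
      have h1 : (0:ℝ) ≤ s ^ ((n : ℝ) - k - 1) := Real.rpow_nonneg hs0.le _
      have h2 : (0:ℝ) ≤ r ^ 2 - s ^ 2 := by nlinarith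
      have h3 : (0:ℝ) ≤ (k : ℝ) / 2 - 1 := by
        have : (2:ℝ) ≤ k := by exact_mod_cast hk
        linarith
      have h4 : (r ^ 2 - s ^ 2) ^ ((k : ℝ) / 2 - 1) ≤ (r ^ 2) ^ ((k : ℝ) / 2 - 1) :=
        Real.rpow_le_rpow h2 (by nlinarith) h3
      have h5 : (r ^ 2 : ℝ) ^ ((k : ℝ) / 2 - 1) = r ^ ((k : ℝ) - 2) := by
        rw [← Real.rpow_natCast r 2, ← Real.rpow_mul hr.le]
        norm_num
        ring_nf
      rw [Real.norm_eq_abs, abs_mul, abs_mul, abs_of_nonneg h1,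
        abs_of_nonneg (Real.rpow_nonneg h2 _)]
      calc s ^ ((n : ℝ) - k - 1) * |w s| * (r ^ 2 - s ^ 2) ^ ((k : ℝ) / 2 - 1)
          ≤ s ^ ((n : ℝ) - k - 1) * |w s| * (r ^ 2) ^ ((k : ℝ) / 2 - 1) := by
            apply mul_le_mul_of_nonneg_left h4 (by positivity)
        _ = s ^ ((n : ℝ) - k - 1) * |w s| * r ^ ((k : ℝ) - 2) := by rw [h5]
    have hint : |∫ s in Set.Ioo 0 r, s ^ ((n : ℝ) - k - 1) * w s *
        (r ^ 2 - s ^ 2) ^ ((k : ℝ) / 2 - 1)| ≤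
        ∫ s in Set.Ioo 0 r, s ^ ((n : ℝ) - k - 1) * |w s| * r ^ ((k : ℝ) - 2) := by
      simpa using norm_integral_le_of_norm_le hg hbound
    have hmono : ∫ s in Set.Ioo 0 r, s ^ ((n : ℝ) - k - 1) * |w s| * r ^ ((k : ℝ) - 2) ≤
        I₀ * r ^ ((k : ℝ) - 2) := by
      rw [hI0_def, ← integral_mul_const]
      apply setIntegral_mono_set (hI.mul_const _)
      · rw [Filter.EventuallyLE, ae_restrict_iff' measurableSet_Ioi]
        filter_upwards with s hs
        have hs0 : (0:ℝ) < s := hs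
        dsimp
        positivity
      · exact HasSubset.Subset.eventuallyLE hIoo
    rw [hψ r hr, abs_mul, abs_mul, abs_of_nonneg hc,
      abs_of_nonneg (Real.rpow_nonneg hr.le _)]
    calc c * r ^ ((2:ℝ) - n) * |∫ s in Set.Ioo 0 r, s ^ ((n : ℝ) - k - 1) * w s *
          (r ^ 2 - s ^ 2) ^ ((k : ℝ) / 2 - 1)|
        ≤ c * r ^ ((2:ℝ) - n) * (I₀ * r ^ ((k : ℝ) - 2)) := by
          apply mul_le_mul_of_nonneg_left (hint.trans hmono) (by positivity)
      _ = c * I₀ * (r ^ ((2:ℝ) - n) * r ^ ((k : ℝ) - 2)) := by ring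
      _ = c * I₀ * r ^ ((k : ℝ) - n) := by
          rw [← Real.rpow_add hr]; ring_nf
  -- pointwise bound on the integrand
  set C := c * I₀ * ‖x‖ ^ ((k : ℝ) - n) with hC_def
  have hC : 0 ≤ C := by positivity
  have key : ∀ t ∈ Set.Ioi ε, ENNReal.ofReal (|ψ (‖x‖ / t)| * t ^ (-(n : ℝ) - 1)) ≤
      ENNReal.ofReal (C * t ^ (-(k : ℝ) - 1)) := by
    intro t ht
    have ht0 : 0 < t := hε.trans ht
    apply ENNReal.ofReal_le_ofReal
    have hr : 0 < ‖x‖ / t := by positivity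
    have h1 : |ψ (‖x‖ / t)| * t ^ (-(n : ℝ) - 1) ≤
        c * I₀ * (‖x‖ / t) ^ ((k : ℝ) - n) * t ^ (-(n : ℝ) - 1) :=
      mul_le_mul_of_nonneg_right (hψb _ hr) (Real.rpow_nonneg ht0.le _)
    refine h1.trans (le_of_eq ?_)
    rw [div_eq_mul_inv, Real.mul_rpow hxn.le (inv_nonneg.2 ht0.le),
      ← Real.rpow_neg_one t, ← Real.rpow_mul ht0.le,
      hC_def, show (-(k:ℝ) - 1) = (-1 * (((k:ℝ) - n))) + (-(n:ℝ) - 1) by ring,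
      Real.rpow_add ht0]
    push_cast
    ring
  calc (∫⁻ t in Set.Ioi ε, ENNReal.ofReal (|ψ (‖x‖ / t)| * t ^ (-(n : ℝ) - 1)))
      ≤ ∫⁻ t in Set.Ioi ε, ENNReal.ofReal (C * t ^ (-(k : ℝ) - 1)) := by
        apply setLIntegral_mono (by fun_prop) key
    _ = ENNReal.ofReal (∫ t in Set.Ioi ε, C * t ^ (-(k : ℝ) - 1)) := by
        rw [← ofReal_integral_eq_lintegral_ofReal]
        · exact ((integrableOn_Ioi_rpow_of_lt (by
            have : (2:ℝ) ≤ k := by exact_mod_cast hk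
            linarith) hε).const_mul C)
        · filter_upwards [ae_restrict_mem measurableSet_Ioi] with t ht
          have ht0 : (0:ℝ) < t := hε.trans ht
          positivity
    _ ≤ ENNReal.ofReal (c * I₀ / k * ε ^ (-(k : ℝ)) * ‖x‖ ^ ((k : ℝ) - n)) := by
        apply ENNReal.ofReal_le_ofReal
        rw [integral_const_mul, integral_Ioi_rpow_of_lt (by
            have : (2:ℝ) ≤ k := by exact_mod_cast hk
            linarith) hε]
        have hk0 : (0:ℝ) < k := by exact_mod_cast (by omega : 0 < k)
        have : -(k : ℝ) - 1 + 1 = -(k:ℝ) := by ring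
        rw [this, hC_def]
        rw [neg_div, div_neg, neg_neg]
        apply le_of_eq
        field_simp
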